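/- (Gossez) Let T : E → 2^{E*} be a maximal monotone operator of type (D) on a real Banach space E and let λ > 0. Then R(T̄ + λ(∂j*)^{-1}) = E*: for every w* ∈ E* there exist x** ∈ E**, x* ∈ E* and z* ∈ T̄(x**) such that x** ∈ ∂j*(x*) and w* = z* + λx*, where j*(x*) = (1/2)‖x*‖² on E*. -/

import Mathlib

open NormedSpace Filter Topology

/-- The Gossez extension `T̄ : E** → 2^{E*}` of `T`: `x* ∈ T̄(x**)` iff `(x**, x*)` is
monotonically related to the graph of `T` (via the canonical embedding of `E` in `E**`). -/
def gossezExtension {E : Type*} [NormedAddCommGroup E] [NormedSpace ℝ E]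
    (T : E → Set (StrongDual ℝ E)) (x'' : StrongDual ℝ (StrongDual ℝ E)) : Set (StrongDual ℝ E) :=
  {x' | ∀ y y', y' ∈ T y → 0 ≤ (x'' - inclusionInDoubleDual ℝ E y) (x' - y')}

/-- `T` is of type (D): every `(x**, x*) ∈ G(T̄)` is the limit of a bounded net from `G(T)`,
weak* in the first coordinate and in norm in the second (formulated via filters). -/
def IsTypeD {E : Type*} [NormedAddCommGroup E] [NormedSpace ℝ E]
    (T : E → Set (StrongDual ℝ E)) : Prop :=
  ∀ (x'' : StrongDual ℝ (StrongDual ℝ E)) (x' : StrongDual ℝ E), x' ∈ gossezExtension T x'' →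
    ∃ l : Filter (E × StrongDual ℝ E), l.NeBot ∧
      (∀ᶠ p in l, p.2 ∈ T p.1) ∧
      (∃ M : ℝ, ∀ᶠ p in l, ‖p.1‖ ≤ M) ∧
      (∀ y' : StrongDual ℝ E, Tendsto (fun p : E × StrongDual ℝ E => y' p.1) l (𝓝 (x'' y'))) ∧
      Tendsto (fun p : E × StrongDual ℝ E => p.2) l (𝓝 x')

/-!
Replacing `T` by `(T - w*) / λ` reduces the claim to `λ = 1`, `w* = 0`. For maximal monotone `T`
the Fitzpatrick function dominates the duality pairing, which dominates the concave function
`-(½‖x‖² + ½‖x*‖²)`; an affine function sandwiched between the two (Hahn–Banach) yields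
`(p, p**) ∈ E* × E**` with `⟨y*, y⟩ - ⟨p, y⟩ - ⟨p**, y*⟩ ≥ ½‖p‖² + ½‖p**‖²` on `G(T)`.
Type (D) implies type (NI), which at `(p**, p)` gives `⟨p**, p⟩ ≤ -(½‖p‖² + ½‖p**‖²)`.
Hence `‖p**‖ = ‖p‖` and `⟨p**, p⟩ = -‖p‖²`, i.e. `p ∈ T̄(p**)` and `p** ∈ ∂j*(-p)`.
-/

open Set

section Duality

variable {F : Type*} [NormedAddCommGroup F] [NormedSpace ℝ F]

theorem exists_affine_between_of_concaveOn
    {A : Set (F × ℝ)} (hA : Convex ℝ A) (hA₀ : A.Nonempty) {g : F → ℝ} (hg : Continuous g)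
    (hgc : ConcaveOn ℝ univ g) (hgA : ∀ p ∈ A, g p.1 ≤ p.2) :
    ∃ (φ : StrongDual ℝ F) (β : ℝ), (∀ v, g v ≤ φ v + β) ∧ ∀ p ∈ A, φ p.1 + β ≤ p.2 := by
  set B : Set (F × ℝ) := {p | p.2 < g p.1}
  have hB : Convex ℝ B := by simpa using hgc.convex_strict_hypograph
  have hBo : IsOpen B := isOpen_lt continuous_snd (hg.comp continuous_fst)
  have hAB : Disjoint B A := disjoint_left.mpr fun p hpB hpA => (hgA p hpA).not_gt hpB
  obtain ⟨f, u, hfB, hfA⟩ := geometric_hahn_banach_open hB hBo hA hAB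
  set ψ := f.comp (.inl ℝ F ℝ)
  set c := f (0, 1)
  have hf : ∀ v t, f (v, t) = ψ v + t * c := fun v t => by
    rw [show ((v, t) : F × ℝ) = (v, 0) + t • (0, 1) by simp, map_add, map_smul, smul_eq_mul]
    rfl
  obtain ⟨⟨v₀, t₀⟩, hp₀⟩ := hA₀
  have hc : 0 < c := by
    have h₁ := hfB (v₀, g v₀ - 1) (show g v₀ - 1 < g v₀ by linarith)
    have h₂ := hfA _ hp₀
    rw [hf] at h₁ h₂
    nlinarith [hgA _ hp₀]
  have hφ : ∀ v, (-c⁻¹ • ψ) v + u / c = (u - ψ v) / c := fun v => by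
    simp only [smul_apply, smul_eq_mul]
    field_simp
    ring
  refine ⟨-c⁻¹ • ψ, u / c, fun v => ?_, fun p hp => ?_⟩
  · rw [hφ]
    refine le_of_forall_lt fun t ht => ?_
    rw [lt_div_iff₀ hc, lt_sub_iff_add_lt', ← hf]
    exact hfB (v, t) ht
  · rw [hφ, div_le_iff₀ hc, sub_le_iff_le_add', ← hf]
    exact hfA p hp

theorem convexOn_univ_half_sq_norm : ConvexOn ℝ univ fun v : F => 1 / 2 * ‖v‖ ^ 2 :=
  (convexOn_univ_norm.pow (fun _ _ => norm_nonneg _) 2).smul (by norm_num)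

theorem neg_opNorm_mul_norm_le_apply (p : StrongDual ℝ F) (v : F) : -(‖p‖ * ‖v‖) ≤ p v :=
  (abs_le.mp (p.le_opNorm v)).1

theorem half_sq_opNorm_le_of_apply_sub_le {p : StrongDual ℝ F} {β : ℝ}
    (h : ∀ a, p a - 1 / 2 * ‖a‖ ^ 2 ≤ β) : 1 / 2 * ‖p‖ ^ 2 ≤ β := by
  have hβ : 0 ≤ β := by simpa using h 0
  have hp : ‖p‖ ≤ √(2 * β) := p.opNorm_le_of_unit_norm (Real.sqrt_nonneg _) fun x hx => by
    have := h (p x • x)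
    rw [map_smul, smul_eq_mul, norm_smul, hx, mul_one, Real.norm_eq_abs, sq_abs] at this
    exact Real.abs_le_sqrt (by linarith)
  have := pow_le_pow_left₀ (norm_nonneg p) hp 2
  rw [Real.sq_sqrt (by positivity)] at this
  linarith

theorem apply_sub_le_half_sq_sub_half_sq {φ : StrongDual ℝ (StrongDual ℝ F)} {x : StrongDual ℝ F}
    (hφx : φ x = ‖x‖ ^ 2) (hφ : ‖φ‖ ≤ ‖x‖) (y : StrongDual ℝ F) :
    φ (y - x) ≤ 1 / 2 * ‖y‖ ^ 2 - 1 / 2 * ‖x‖ ^ 2 := by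
  have : φ y ≤ ‖x‖ * ‖y‖ :=
    (le_abs_self _).trans <| (φ.le_opNorm y).trans (by gcongr)
  rw [map_sub, hφx]
  nlinarith [sq_nonneg (‖x‖ - ‖y‖)]

end Duality

section MonotoneOperator

variable {E : Type*} [NormedAddCommGroup E] [NormedSpace ℝ E]

def IsMonotoneOperator (T : E → Set (StrongDual ℝ E)) : Prop :=
  ∀ x y x' y', x' ∈ T x → y' ∈ T y → 0 ≤ (x' - y') (x - y)

def IsMaximalOperator (T : E → Set (StrongDual ℝ E)) : Prop :=
  ∀ x x', (∀ y y', y' ∈ T y → 0 ≤ (x' - y') (x - y)) → x' ∈ T x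

/-- Gossez's type (NI): `inf_{(y, y*) ∈ G(T)} ⟨x** - ŷ, x* - y*⟩ ≤ 0` for all `(x**, x*)`. -/
def IsTypeNI (T : E → Set (StrongDual ℝ E)) : Prop :=
  ∀ (x'' : StrongDual ℝ (StrongDual ℝ E)) (x' : StrongDual ℝ E), ∀ ε > 0,
    ∃ y y', y' ∈ T y ∧ (x'' - inclusionInDoubleDual ℝ E y) (x' - y') < ε

variable {T : E → Set (StrongDual ℝ E)}

theorem IsMaximalOperator.exists_mem (hmax : IsMaximalOperator T) : ∃ y y', y' ∈ T y := by
  by_contra! h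
  exact h 0 0 (hmax 0 0 fun y y' hy => (h y y' hy).elim)

/-- Points of `T̄(x**)` are approximated by the graph, with the pairing bounded by
`(‖x**‖ + M) ‖x* - y*‖`; points outside `T̄(x**)` witness the inequality outright. -/
theorem IsTypeD.isTypeNI (hD : IsTypeD T) : IsTypeNI T := by
  intro x'' x' ε hε
  by_cases h : x' ∈ gossezExtension T x''
  · obtain ⟨l, hl, hgr, ⟨M, hM⟩, -, hs⟩ := hD x'' x' h
    have hpair : Tendsto (fun p : E × StrongDual ℝ E =>
        (x'' - inclusionInDoubleDual ℝ E p.1) (x' - p.2)) l (𝓝 0) := by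
      have hlim := ((tendsto_const_nhds (x := x')).sub hs).norm.const_mul (‖x''‖ + M)
      rw [sub_self, norm_zero, mul_zero] at hlim
      refine squeeze_zero_norm' ?_ hlim
      filter_upwards [hM] with p hp
      calc ‖(x'' - inclusionInDoubleDual ℝ E p.1) (x' - p.2)‖
          ≤ ‖x'' - inclusionInDoubleDual ℝ E p.1‖ * ‖x' - p.2‖ := ContinuousLinearMap.le_opNorm _ _
        _ ≤ (‖x''‖ + M) * ‖x' - p.2‖ := by
          gcongr
          linarith [norm_sub_le x'' (inclusionInDoubleDual ℝ E p.1), double_dual_bound ℝ E p.1]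
    obtain ⟨p, hp, hlt⟩ := (hgr.and (hpair (Iio_mem_nhds hε))).exists
    exact ⟨p.1, p.2, hp, hlt⟩
  · simp only [gossezExtension, mem_ofPred_eq, not_forall, not_le] at h
    obtain ⟨y, y', hy, hlt⟩ := h
    exact ⟨y, y', hy, hlt.trans hε⟩

/-- The epigraph of the Fitzpatrick function
`φ_T(x, x*) = sup_{(y, y*) ∈ G(T)} ⟨x*, y⟩ + ⟨y*, x⟩ - ⟨y*, y⟩`. -/
def fitzpatrickEpigraph (T : E → Set (StrongDual ℝ E)) : Set ((E × StrongDual ℝ E) × ℝ) :=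
  {q | ∀ y y', y' ∈ T y → q.1.2 y + y' q.1.1 - y' y ≤ q.2}

theorem convex_fitzpatrickEpigraph : Convex ℝ (fitzpatrickEpigraph T) := by
  intro p hp q hq a b ha hb hab y y' hy
  have key : (a • p + b • q).1.2 y + y' (a • p + b • q).1.1 - y' y
      = a * (p.1.2 y + y' p.1.1 - y' y) + b * (q.1.2 y + y' q.1.1 - y' y) := by
    simp only [Prod.fst_add, Prod.snd_add, Prod.smul_fst, Prod.smul_snd, map_add, map_smul,
      add_apply, smul_apply, smul_eq_mul]
    linear_combination (y' y) * hab
  rw [key]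
  simp only [Prod.snd_add, Prod.smul_snd, smul_eq_mul]
  gcongr
  exacts [hp y y' hy, hq y y' hy]

theorem mem_fitzpatrickEpigraph (hmono : IsMonotoneOperator T) {y : E} {y' : StrongDual ℝ E}
    (hy : y' ∈ T y) : ((y, y'), y' y) ∈ fitzpatrickEpigraph T := by
  intro z z' hz
  have := hmono y z y' z' hy hz
  simp only [sub_apply, map_sub] at this ⊢
  linarith

theorem apply_le_of_mem_fitzpatrickEpigraph (hmax : IsMaximalOperator T)
    {q : (E × StrongDual ℝ E) × ℝ} (hq : q ∈ fitzpatrickEpigraph T) : q.1.2 q.1.1 ≤ q.2 := by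
  by_cases hrel : ∀ y y', y' ∈ T y → 0 ≤ (q.1.2 - y') (q.1.1 - y)
  · simpa using hq _ _ (hmax _ _ hrel)
  · push Not at hrel
    obtain ⟨y, y', hy, hlt⟩ := hrel
    have := hq y y' hy
    simp only [sub_apply, map_sub] at hlt
    linarith

theorem exists_dual_le_neg_half_sq (hmono : IsMonotoneOperator T) (hmax : IsMaximalOperator T) :
    ∃ (p₁ : StrongDual ℝ E) (p₂ : StrongDual ℝ (StrongDual ℝ E)), ∀ y y', y' ∈ T y →
      p₁ y + p₂ y' - y' y ≤ -(1 / 2 * ‖p₁‖ ^ 2 + 1 / 2 * ‖p₂‖ ^ 2) := by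
  set g : E × StrongDual ℝ E → ℝ := fun v => -(1 / 2 * ‖v.1‖ ^ 2 + 1 / 2 * ‖v.2‖ ^ 2)
  have hg : Continuous g := by fun_prop
  have hgc : ConcaveOn ℝ univ g :=
    ((convexOn_univ_half_sq_norm.comp_linearMap (LinearMap.fst ℝ _ _)).add
      (convexOn_univ_half_sq_norm.comp_linearMap (LinearMap.snd ℝ _ _))).neg
  -- Fenchel–Young: `g ≤` the duality pairing `≤` the Fitzpatrick function.
  have hgA : ∀ q ∈ fitzpatrickEpigraph T, g q.1 ≤ q.2 := fun q hq => by
    have := neg_opNorm_mul_norm_le_apply q.1.2 q.1.1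
    simp only [g]
    nlinarith [apply_le_of_mem_fitzpatrickEpigraph hmax hq, sq_nonneg (‖q.1.1‖ - ‖q.1.2‖)]
  obtain ⟨y₀, y₀', hy₀⟩ := hmax.exists_mem
  obtain ⟨φ, β, hφg, hφA⟩ := exists_affine_between_of_concaveOn
    (convex_fitzpatrickEpigraph (T := T)) ⟨_, mem_fitzpatrickEpigraph hmono hy₀⟩ hg hgc hgA
  set p₁ := φ.comp (.inl ℝ E (StrongDual ℝ E))
  set p₂ := φ.comp (.inr ℝ E (StrongDual ℝ E))
  have hφ : ∀ v, φ v = p₁ v.1 + p₂ v.2 := fun v => (φ.comp_inl_add_comp_inr v).symm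
  -- the conjugate of `g` is computed one coordinate at a time
  have hβ₁ : ∀ b, 1 / 2 * ‖p₁‖ ^ 2 ≤ β + p₂ b + 1 / 2 * ‖b‖ ^ 2 := fun b => by
    rw [← norm_neg p₁]
    refine half_sq_opNorm_le_of_apply_sub_le fun a => ?_
    have := hφg (a, b)
    simp only [g, hφ, neg_apply] at this ⊢
    linarith
  have hβ : 1 / 2 * ‖p₂‖ ^ 2 ≤ β - 1 / 2 * ‖p₁‖ ^ 2 := by
    rw [← norm_neg p₂]
    refine half_sq_opNorm_le_of_apply_sub_le fun b => ?_
    have := hβ₁ b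
    rw [neg_apply]
    linarith
  refine ⟨p₁, p₂, fun y y' hy => ?_⟩
  have := hφA _ (mem_fitzpatrickEpigraph hmono hy)
  rw [hφ] at this
  linarith

theorem IsTypeNI.exists_neg_mem_gossezExtension (hNI : IsTypeNI T)
    (hmono : IsMonotoneOperator T) (hmax : IsMaximalOperator T) :
    ∃ (x'' : StrongDual ℝ (StrongDual ℝ E)) (x' : StrongDual ℝ E),
      -x' ∈ gossezExtension T x'' ∧ x'' x' = ‖x'‖ ^ 2 ∧ ‖x''‖ ≤ ‖x'‖ := by
  obtain ⟨p₁, p₂, hp⟩ := exists_dual_le_neg_half_sq hmono hmax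
  have hexpand : ∀ y y', (p₂ - inclusionInDoubleDual ℝ E y) (p₁ - y')
      = p₂ p₁ - (p₁ y + p₂ y' - y' y) := fun y y' => by
    simp only [sub_apply, map_sub, NormedSpace.dual_def]
    ring
  have hNI' : p₂ p₁ ≤ -(1 / 2 * ‖p₁‖ ^ 2 + 1 / 2 * ‖p₂‖ ^ 2) := by
    refine le_of_forall_pos_lt_add fun ε hε => ?_
    obtain ⟨y, y', hy, hlt⟩ := hNI p₂ p₁ ε hε
    rw [hexpand] at hlt
    linarith [hp y y' hy]
  -- equality in `-‖p₂‖ ‖p₁‖ ≤ p₂ p₁ ≤ -(½‖p₁‖² + ½‖p₂‖²)` forces `‖p₂‖ = ‖p₁‖`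
  have hCS := neg_opNorm_mul_norm_le_apply p₂ p₁
  have hnorm : ‖p₂‖ = ‖p₁‖ := by nlinarith [sq_nonneg (‖p₁‖ - ‖p₂‖)]
  have hpair : p₂ p₁ = -‖p₁‖ ^ 2 := by nlinarith
  refine ⟨p₂, -p₁, fun y y' hy => ?_, by rw [map_neg, hpair, norm_neg, neg_neg], by
    rw [norm_neg, hnorm]⟩
  rw [neg_neg, hexpand]
  nlinarith [hp y y' hy]

end MonotoneOperator

section AffineRescale

variable {E : Type*} [NormedAddCommGroup E] [NormedSpace ℝ E] {T : E → Set (StrongDual ℝ E)}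
  {lam : ℝ} {w' : StrongDual ℝ E}

/-- The operator `(T - w*) / λ`. -/
def affineRescale (T : E → Set (StrongDual ℝ E)) (lam : ℝ) (w' : StrongDual ℝ E) (y : E) :
    Set (StrongDual ℝ E) :=
  {s | lam • s + w' ∈ T y}

theorem smul_add_sub_smul_add (lam : ℝ) (s t w : StrongDual ℝ E) :
    (lam • s + w) - (lam • t + w) = lam • (s - t) := by
  module

theorem exists_mem_affineRescale (hlam : lam ≠ 0) {y : E} {y' : StrongDual ℝ E} (hy : y' ∈ T y) :
    ∃ s ∈ affineRescale T lam w' y, lam • s + w' = y' := by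
  have hs : lam • lam⁻¹ • (y' - w') + w' = y' := by rw [smul_inv_smul₀ hlam, sub_add_cancel]
  exact ⟨lam⁻¹ • (y' - w'), by rwa [affineRescale, mem_ofPred_eq, hs], hs⟩

theorem isMonotoneOperator_affineRescale (hlam : 0 < lam) (hmono : IsMonotoneOperator T) :
    IsMonotoneOperator (affineRescale T lam w') := by
  intro x y s t hs ht
  have := hmono x y _ _ hs ht
  rwa [smul_add_sub_smul_add, smul_apply, smul_eq_mul,
    mul_nonneg_iff_of_pos_left hlam] at this

theorem isMaximalOperator_affineRescale (hlam : 0 < lam) (hmax : IsMaximalOperator T) :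
    IsMaximalOperator (affineRescale T lam w') := by
  intro x s h
  refine hmax x _ fun y y' hy => ?_
  obtain ⟨t, ht, rfl⟩ := exists_mem_affineRescale (w' := w') hlam.ne' hy
  rw [smul_add_sub_smul_add, smul_apply, smul_eq_mul]
  exact mul_nonneg hlam.le (h y t ht)

theorem smul_add_mem_gossezExtension_of_mem_affineRescale (hlam : 0 < lam)
    {x'' : StrongDual ℝ (StrongDual ℝ E)} {x' : StrongDual ℝ E}
    (hx : x' ∈ gossezExtension (affineRescale T lam w') x'') :
    lam • x' + w' ∈ gossezExtension T x'' := by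
  intro y y' hy
  obtain ⟨t, ht, rfl⟩ := exists_mem_affineRescale (w' := w') hlam.ne' hy
  rw [smul_add_sub_smul_add, map_smul, smul_eq_mul]
  exact mul_nonneg hlam.le (hx y t ht)

theorem IsTypeNI.affineRescale (hNI : IsTypeNI T) (hlam : 0 < lam) :
    IsTypeNI (affineRescale T lam w') := by
  intro x'' x' ε hε
  obtain ⟨y, y', hy, hlt⟩ := hNI x'' (lam • x' + w') (lam * ε) (by positivity)
  obtain ⟨s, hs, rfl⟩ := exists_mem_affineRescale (w' := w') hlam.ne' hy
  rw [smul_add_sub_smul_add, map_smul, smul_eq_mul] at hlt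
  exact ⟨y, s, hs, lt_of_mul_lt_mul_left hlt hlam.le⟩

end AffineRescale

theorem gossez_surjectivity_general
    {E : Type*} [NormedAddCommGroup E] [NormedSpace ℝ E]
    (T : E → Set (StrongDual ℝ E))
    (hmono : ∀ x y x' y', x' ∈ T x → y' ∈ T y → 0 ≤ (x' - y') (x - y))
    (hmax : ∀ x x', (∀ y y', y' ∈ T y → 0 ≤ (x' - y') (x - y)) → x' ∈ T x)
    (hD : IsTypeD T) (lam : ℝ) (hlam : 0 < lam) :
    ∀ w' : StrongDual ℝ E, ∃ (x'' : StrongDual ℝ (StrongDual ℝ E)) (x' z' : StrongDual ℝ E),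
      z' ∈ gossezExtension T x'' ∧
      (∀ y' : StrongDual ℝ E, x'' (y' - x') ≤ (1 / 2) * ‖y'‖ ^ 2 - (1 / 2) * ‖x'‖ ^ 2) ∧
      w' = z' + lam • x' := by
  intro w'
  obtain ⟨x'', x', hx, hpair, hnorm⟩ :=
    (hD.isTypeNI.affineRescale hlam (w' := w')).exists_neg_mem_gossezExtension
      (isMonotoneOperator_affineRescale hlam hmono) (isMaximalOperator_affineRescale hlam hmax)
  refine ⟨x'', x', lam • -x' + w', smul_add_mem_gossezExtension_of_mem_affineRescale hlam hx,
    apply_sub_le_half_sq_sub_half_sq hpair hnorm, ?_⟩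
  module

/-- **Gossez.** If `T` is maximal monotone of type (D) on a real Banach space `E` and `λ > 0`,
then `R(T̄ + λ(∂j*)⁻¹) = E*`: every `w* ∈ E*` can be written `w* = z* + λ x*` with
`z* ∈ T̄(x**)` and `x** ∈ ∂j*(x*)`, where `j*(x*) = ½‖x*‖²`. -/
theorem gossez_surjectivity
    {E : Type*} [NormedAddCommGroup E] [NormedSpace ℝ E] [CompleteSpace E]
    (T : E → Set (StrongDual ℝ E))
    (hmono : ∀ x y x' y', x' ∈ T x → y' ∈ T y → 0 ≤ (x' - y') (x - y))
    (hmax : ∀ x x', (∀ y y', y' ∈ T y → 0 ≤ (x' - y') (x - y)) → x' ∈ T x)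
    (hD : IsTypeD T) (lam : ℝ) (hlam : 0 < lam) :
    ∀ w' : StrongDual ℝ E, ∃ (x'' : StrongDual ℝ (StrongDual ℝ E)) (x' z' : StrongDual ℝ E),
      z' ∈ gossezExtension T x'' ∧
      (∀ y' : StrongDual ℝ E, x'' (y' - x') ≤ (1 / 2) * ‖y'‖ ^ 2 - (1 / 2) * ‖x'‖ ^ 2) ∧
      w' = z' + lam • x' :=
  gossez_surjectivity_general T hmono hmax hD lam hlam
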